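/- Let s ≥ 2 be an integer and let g : ℝ → ℝ satisfy: for every admissible digit sequence a, g(∑_{n=0}^∞ a n / s^{n+1}) = ∑_{n=0}^∞ (−1)^{n+1} a n / s^{n+1}. Then the image g '' [0,1) is contained in the interval [−s/(s+1), 1/(s+1)], and the complement [−s/(s+1), 1/(s+1)] \ (g '' [0,1)) is a countable set. (Paper's Lemma 3, first property, for the function f₊: f₊ maps [0,1) onto the interval [−s/(s+1), 1/(s+1)] with at most a countable set of points omitted.) -/

import Mathlib

/-!
Complementing the digits in even positions (`d ↦ b - 1 - d`) turns the nega-`b`-adic value of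
a digit sequence into its `b`-adic value minus `b/(b+1)`, the `b`-adic value of
`(b-1) 0 (b-1) 0 …`. As `b`-adic values of digit sequences fill `[0,1]`, nega-`b`-adic values
fill `[-b/(b+1), 1/(b+1)]`. The standard expansion of `x ∈ [0,1)` is admissible, which gives the
inclusion; a point of the interval can be missed by `g` only if it is the nega-value of a
sequence ending in `b - 1`'s, and there are countably many of those.
-/

open Set

theorem countable_setOf_eventually_eq {α : Type*} [Countable α] (c : α) :
    {f : ℕ → α | ∃ N, ∀ n ≥ N, f n = c}.Countable := by
  have hunion :
      {f : ℕ → α | ∃ N, ∀ n ≥ N, f n = c} = ⋃ N, {f | ∀ n ≥ N, f n = c} := by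
    ext f; simp
  rw [hunion]
  refine countable_iUnion fun N => ?_
  refine (mapsTo_univ (fun f (i : Fin N) => f i) _).countable_of_injOn ?_ countable_univ
  intro f hf f' hf' h
  funext n
  by_cases hn : n < N
  · exact congrFun h ⟨n, hn⟩
  · rw [hf n (not_lt.mp hn), hf' n (not_lt.mp hn)]

theorem hasSum_ite_even_div_pow {r : ℝ} (hr : 1 < r) :
    HasSum (fun n : ℕ => if Even n then (r - 1) / r ^ (n + 1) else 0) (r / (r + 1)) := by
  have hr0 : 0 < r := by linarith
  have heven : HasSum (fun k : ℕ => (r - 1) / r ^ (2 * k + 1)) (r / (r + 1)) := by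
    have hterm : (fun k : ℕ => (r - 1) / r ^ (2 * k + 1)) =
        fun k => (r - 1) / r * (r ^ 2)⁻¹ ^ k := by
      ext k; rw [pow_succ, pow_mul, inv_pow]; field_simp
    have hval : (r - 1) / r * (1 - (r ^ 2)⁻¹)⁻¹ = r / (r + 1) := by
      have : r ^ 2 - 1 ≠ 0 := by nlinarith
      field_simp
      ring
    rw [hterm, ← hval]
    exact (hasSum_geometric_of_lt_one (by positivity)
      (inv_lt_one_of_one_lt₀ (by nlinarith))).mul_left _
  rw [← add_zero (r / (r + 1))]
  refine HasSum.even_add_odd ?_ ?_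
  · simpa only [even_two_mul, if_true] using heven
  · simpa only [Nat.not_even_bit1, if_false] using hasSum_zero

namespace Real

variable {b : ℕ}

theorem ofDigits_lt_one {d : ℕ → Fin b} {m : ℕ} (hm : (d m : ℕ) ≠ b - 1) :
    ofDigits d < 1 := by
  have hb : 1 < b := by have := (d m).isLt; omega
  rw [← ofDigits_const_last_eq_one' hb]
  refine Summable.tsum_lt_tsum_of_nonneg (i := m) (fun _ => ofDigitsTerm_nonneg)
    (fun n => ?_) ?_ summable_ofDigitsTerm <;> unfold ofDigitsTerm
  · gcongr
    exact Nat.le_sub_one_of_lt (d n).isLt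
  · gcongr
    exact Nat.lt_of_le_of_ne (Nat.le_sub_one_of_lt (d m).isLt) hm

theorem digits_not_eventually_last {x : ℝ} [NeZero b] (hb : 1 < b) (hx : x ∈ Ico 0 1) :
    ¬ ∃ N, ∀ n ≥ N, (digits x b n : ℕ) = b - 1 := by
  rintro ⟨N, hN⟩
  have htail : ofDigits (fun i => digits x b (i + N)) = 1 := by
    rw [← ofDigits_const_last_eq_one' hb]
    congr with i
    exact hN _ (Nat.le_add_left N i)
  have hsplit := ofDigits_eq_sum_add_ofDigits (digits x b) N
  rw [ofDigits_digits hb hx, htail, mul_one] at hsplit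
  have hfloor := ofDigits_digits_sum_eq (b := b) hx N
  have hbN : (0 : ℝ) < (b : ℝ) ^ N := by positivity
  -- a tail of `b - 1`'s would put `b ^ N * x` one above its own floor
  have : (b : ℝ) ^ N * x = ⌊(b : ℝ) ^ N * x⌋₊ + 1 := by
    rw [← hfloor, ← mul_inv_cancel₀ hbN.ne', ← mul_add, ← hsplit]
  linarith [Nat.lt_floor_add_one ((b : ℝ) ^ N * x)]

def revEven (d : ℕ → Fin b) : ℕ → Fin b := fun n => if Even n then (d n).rev else d n

theorem revEven_revEven (d : ℕ → Fin b) : revEven (revEven d) = d := by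
  ext n
  unfold revEven
  split_ifs <;> simp

noncomputable def negaOfDigits (d : ℕ → Fin b) : ℝ :=
  ∑' n, (-1 : ℝ) ^ (n + 1) * (d n : ℝ) / (b : ℝ) ^ (n + 1)

theorem negaOfDigits_eq_ofDigits_revEven_sub (hb : 1 < b) (d : ℕ → Fin b) :
    negaOfDigits d = ofDigits (revEven d) - b / (b + 1) := by
  have hterm : (fun n : ℕ => (-1 : ℝ) ^ (n + 1) * (d n : ℝ) / (b : ℝ) ^ (n + 1)) =
      fun n => ofDigitsTerm (revEven d) n -
        if Even n then (b - 1) / (b : ℝ) ^ (n + 1) else 0 := by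
    ext n
    unfold ofDigitsTerm revEven
    by_cases hn : Even n
    · have hrev : ((d n).rev : ℝ) = b - 1 - d n := by
        rw [Fin.val_rev, Nat.cast_sub (d n).isLt]; push_cast; ring
      simp only [hn, if_true, hrev, hn.add_one.neg_one_pow]
      ring
    · simp only [hn, if_false, (Nat.not_even_iff_odd.mp hn).add_one.neg_one_pow]
      ring
  unfold negaOfDigits
  rw [hterm]
  exact ((summable_ofDigitsTerm).hasSum.sub
    (hasSum_ite_even_div_pow (by exact_mod_cast hb))).tsum_eq

theorem negaOfDigits_mem_Icc (hb : 1 < b) (d : ℕ → Fin b) :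
    negaOfDigits d ∈ Icc (-(b : ℝ) / (b + 1)) (1 / (b + 1)) := by
  have hsplit : (1 : ℝ) / (b + 1) = 1 - b / (b + 1) := by field_simp; ring
  rw [negaOfDigits_eq_ofDigits_revEven_sub hb, neg_div, hsplit]
  exact ⟨by linarith [ofDigits_nonneg (revEven d)], by linarith [ofDigits_le_one (revEven d)]⟩

theorem negaOfDigits_surjOn (hb : 1 < b) :
    SurjOn (negaOfDigits (b := b)) univ (Icc (-(b : ℝ) / (b + 1)) (1 / (b + 1))) := by
  rintro y ⟨hy₁, hy₂⟩
  have hsplit : (1 : ℝ) / (b + 1) = 1 - b / (b + 1) := by field_simp; ring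
  rw [neg_div] at hy₁
  obtain ⟨c, -, hc⟩ := ofDigits_SurjOn hb
    (show y + b / (b + 1) ∈ Icc 0 1 from ⟨by linarith, by linarith⟩)
  refine ⟨revEven c, mem_univ _, ?_⟩
  rw [negaOfDigits_eq_ofDigits_revEven_sub hb, revEven_revEven, hc, add_sub_cancel_right]

end Real

theorem stmt_3 (s : ℕ) (hs : 2 ≤ s) (g : ℝ → ℝ)
    (hg : ∀ a : ℕ → ℕ, (∀ n, a n ≤ s - 1) → (¬ ∃ N, ∀ n ≥ N, a n = s - 1) →
      g (∑' n : ℕ, (a n : ℝ) / (s : ℝ) ^ (n + 1)) =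
        ∑' n : ℕ, (-1 : ℝ) ^ (n + 1) * (a n : ℝ) / (s : ℝ) ^ (n + 1)) :
    g '' Set.Ico 0 1 ⊆ Set.Icc (-(s : ℝ) / ((s : ℝ) + 1)) (1 / ((s : ℝ) + 1)) ∧
    (Set.Icc (-(s : ℝ) / ((s : ℝ) + 1)) (1 / ((s : ℝ) + 1)) \ g '' Set.Ico 0 1).Countable := by
  have hs₁ : 1 < s := hs
  have : NeZero s := ⟨by omega⟩
  have hg_digits (d : ℕ → Fin s) (hd : ¬ ∃ N, ∀ n ≥ N, (d n : ℕ) = s - 1) :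
      g (Real.ofDigits d) = Real.negaOfDigits d :=
    hg (fun n => d n) (fun n => Nat.le_sub_one_of_lt (d n).isLt) hd
  refine ⟨?_, ?_⟩
  · rintro _ ⟨x, hx, rfl⟩
    rw [← Real.ofDigits_digits hs₁ hx, hg_digits _ (Real.digits_not_eventually_last hs₁ hx)]
    exact Real.negaOfDigits_mem_Icc hs₁ _
  · refine ((countable_setOf_eventually_eq (⟨s - 1, by omega⟩ : Fin s)).image
      Real.negaOfDigits).mono ?_
    rintro y ⟨hy, hy_not_mem⟩
    obtain ⟨d, -, rfl⟩ := Real.negaOfDigits_surjOn hs₁ hy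
    by_cases hd : ∃ N, ∀ n ≥ N, (d n : ℕ) = s - 1
    · obtain ⟨N, hN⟩ := hd
      exact ⟨d, ⟨N, fun n hn => Fin.ext (hN n hn)⟩, rfl⟩
    · obtain ⟨m, hm⟩ : ∃ m, (d m : ℕ) ≠ s - 1 := by simpa using not_exists.mp hd 0
      exact (hy_not_mem ⟨Real.ofDigits d, ⟨Real.ofDigits_nonneg d, Real.ofDigits_lt_one hm⟩,
        hg_digits d hd⟩).elim
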